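/- Let 1 < p < ∞ and let G = d_*((1/n)_{n∈ℕ}). Then every element of G belongs to ℓ_p, and the formal identity map from G into ℓ_p is a bounded linear operator. -/

import Mathlib

open Filter Topology

/-- `rearrSum x n = ∑_{k=1}^n x̃_k`, the sum of the `n` largest values of `(|x_k|)`,
i.e. the `n`-th partial sum of the nonincreasing rearrangement of `(|x_k|)`; it is the
supremum of `∑_{k ∈ A} |x_k|` over finite sets `A ⊆ ℕ` of cardinality `n`. -/
noncomputable def rearrSum (x : ℕ → ℝ) (n : ℕ) : ℝ :=
  sSup ((fun A : Finset ℕ => ∑ k ∈ A, |x k|) '' {A : Finset ℕ | A.card = n})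

/-- A sequence of positive reals is admissible if it is nonincreasing, starts at `1`,
tends to `0` and is not summable. -/
def Admissible (w : ℕ → ℝ) : Prop :=
  (∀ n, 0 < w n) ∧ (∀ n, w (n + 1) ≤ w n) ∧ w 0 = 1 ∧
    Tendsto w atTop (𝓝 0) ∧ ¬ Summable w

/-- The underlying set of sequences of `d_*(w)`: sequences `x ∈ c₀` with
`(∑_{k=1}^n x̃_k) / (∑_{k=1}^n w_k) → 0`. -/
def dStarSet (w : ℕ → ℝ) : Set (ℕ → ℝ) :=
  {x | Tendsto x atTop (𝓝 0) ∧
    Tendsto (fun n => rearrSum x n / ∑ k ∈ Finset.range n, w k) atTop (𝓝 0)}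

/-- The norm of `d_*(w)`: `‖x‖ = sup_n (∑_{k=1}^n x̃_k) / (∑_{k=1}^n w_k)`. -/
noncomputable def dStarNorm (w : ℕ → ℝ) (x : ℕ → ℝ) : ℝ :=
  ⨆ n : ℕ, rearrSum x n / ∑ k ∈ Finset.range n, w k

/-- A normed space `D` is a representation of `d_*(w)` if there is a linear bijection `j`
from `D` onto the set of sequences of `d_*(w)` carrying the norm of `D` to the norm of
`d_*(w)`; i.e. `D` "is" the space `d_*(w)` endowed with its canonical norm. -/
def IsDStarRep (w : ℕ → ℝ) (D : Type*) [NormedAddCommGroup D] [NormedSpace ℝ D]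
    (j : D →ₗ[ℝ] (ℕ → ℝ)) : Prop :=
  Function.Injective j ∧ Set.range j = dStarSet w ∧ ∀ x : D, ‖x‖ = dStarNorm w (j x)

/-!
If `x ∈ d_*(w)` has norm `M`, any `n` of the values `|x k|` sum to at most
`M (w_0 + ⋯ + w_{n-1})`, so the smallest of them is at most `M` times the average of the first
`n` weights. Removing that smallest value and inducting, the `n`-th largest value of `|x|` is at
most `M a_n`, with `a_n` the `n`-th weight average, whence `‖x‖_p ≤ (∑ a_n^p)^{1/p} M`. For
`w_n = 1/n` the averages are `H_n / n ≤ (1 + log n) / n`, which is `p`-summable for `p > 1`.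
-/

open Finset

lemma rearrSum_zero (x : ℕ → ℝ) : rearrSum x 0 = 0 := by
  simp [rearrSum, card_eq_zero]

section RearrSum

variable {x : ℕ → ℝ}

lemma sum_abs_le_rearrSum (hx : BddAbove (Set.range fun k => |x k|)) (A : Finset ℕ) :
    ∑ k ∈ A, |x k| ≤ rearrSum x #A := by
  obtain ⟨B, hB⟩ := hx
  refine le_csSup ⟨#A * B, ?_⟩ ⟨A, rfl, rfl⟩
  rintro _ ⟨S, hS : #S = #A, rfl⟩
  simpa [hS] using sum_le_card_nsmul S _ B fun k _ => hB ⟨k, rfl⟩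

lemma sum_rpow_abs_le_of_rearrSum_le (hx : BddAbove (Set.range fun k => |x k|)) {b : ℕ → ℝ}
    (hb : ∀ n, rearrSum x (n + 1) ≤ b (n + 1)) {p : ℝ} (hp : 0 ≤ p) (A : Finset ℕ) :
    ∑ k ∈ A, |x k| ^ p ≤ ∑ j ∈ range #A, (b (j + 1) / (j + 1)) ^ p := by
  induction A using induction_on_min_value (fun k => |x k|) with
  | empty => simp
  | insert a s has hmin ih =>
    have hxa : |x a| ≤ b (#s + 1) / (#s + 1) := by
      rw [le_div_iff₀ (by positivity), mul_comm]
      calc (#s + 1 : ℝ) * |x a| = ∑ _ ∈ insert a s, |x a| := by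
            simp [card_insert_of_notMem has]
        _ ≤ ∑ k ∈ insert a s, |x k| := sum_le_sum fun k hk => by
            rcases mem_insert.1 hk with rfl | hk
            exacts [le_rfl, hmin k hk]
        _ ≤ rearrSum x (#s + 1) := by
            simpa [card_insert_of_notMem has] using sum_abs_le_rearrSum hx (insert a s)
        _ ≤ b (#s + 1) := hb #s
    rw [sum_insert has, card_insert_of_notMem has, sum_range_succ, add_comm]
    gcongr

end RearrSum

section DStar

variable {w x : ℕ → ℝ}

noncomputable def weightAvg (w : ℕ → ℝ) (n : ℕ) : ℝ :=
  (∑ k ∈ range (n + 1), w k) / (n + 1)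

lemma weightAvg_pos (hw : ∀ n, 0 < w n) (n : ℕ) : 0 < weightAvg w n :=
  div_pos (sum_pos (fun k _ => hw k) nonempty_range_add_one) (by positivity)

lemma dStarNorm_nonneg (hx : x ∈ dStarSet w) : 0 ≤ dStarNorm w x := by
  simpa [dStarNorm] using le_ciSup hx.2.bddAbove_range 0

lemma rearrSum_le_dStarNorm_mul (hw : ∀ n, 0 < w n) (hx : x ∈ dStarSet w) (n : ℕ) :
    rearrSum x n ≤ dStarNorm w x * ∑ k ∈ range n, w k := by
  rcases n.eq_zero_or_pos with rfl | hn
  · simp [rearrSum_zero]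
  · rw [← div_le_iff₀ (sum_pos (fun k _ => hw k) (nonempty_range_iff.2 hn.ne'))]
    exact le_ciSup hx.2.bddAbove_range n

variable {p : ℝ}

lemma sum_range_rpow_abs_le_of_mem_dStarSet (hw : ∀ n, 0 < w n) (hx : x ∈ dStarSet w)
    (hp : 0 ≤ p) (hs : Summable fun j => weightAvg w j ^ p) (n : ℕ) :
    ∑ k ∈ range n, |x k| ^ p ≤ dStarNorm w x ^ p * ∑' j, weightAvg w j ^ p := by
  have hxbdd : BddAbove (Set.range fun k => |x k|) := by
    simpa using hx.1.abs.bddAbove_range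
  calc ∑ k ∈ range n, |x k| ^ p
      ≤ ∑ j ∈ range n, (dStarNorm w x * weightAvg w j) ^ p := by
        simpa only [card_range, mul_div_assoc, weightAvg] using sum_rpow_abs_le_of_rearrSum_le hxbdd
          (b := fun n => dStarNorm w x * ∑ k ∈ range n, w k)
          (fun j => rearrSum_le_dStarNorm_mul hw hx (j + 1)) hp (range n)
    _ = dStarNorm w x ^ p * ∑ j ∈ range n, weightAvg w j ^ p := by
        simp only [Real.mul_rpow (dStarNorm_nonneg hx) (weightAvg_pos hw _).le, mul_sum]
    _ ≤ dStarNorm w x ^ p * ∑' j, weightAvg w j ^ p :=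
        mul_le_mul_of_nonneg_left
          (hs.sum_le_tsum _ fun j _ => Real.rpow_nonneg (weightAvg_pos hw j).le p)
          (Real.rpow_nonneg (dStarNorm_nonneg hx) p)

lemma summable_rpow_abs_of_mem_dStarSet (hw : ∀ n, 0 < w n) (hx : x ∈ dStarSet w)
    (hp : 0 ≤ p) (hs : Summable fun j => weightAvg w j ^ p) :
    Summable fun k => |x k| ^ p :=
  summable_of_sum_range_le (fun k => Real.rpow_nonneg (abs_nonneg (x k)) p)
    (sum_range_rpow_abs_le_of_mem_dStarSet hw hx hp hs)

lemma tsum_rpow_abs_rpow_le_of_mem_dStarSet (hw : ∀ n, 0 < w n) (hx : x ∈ dStarSet w)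
    (hp : 0 < p) (hs : Summable fun j => weightAvg w j ^ p) :
    (∑' k, |x k| ^ p) ^ (1 / p) ≤ (∑' j, weightAvg w j ^ p) ^ (1 / p) * dStarNorm w x := by
  have hM := dStarNorm_nonneg hx
  have hS : 0 ≤ ∑' j, weightAvg w j ^ p :=
    tsum_nonneg fun j => Real.rpow_nonneg (weightAvg_pos hw j).le p
  have hxp : ∀ k, 0 ≤ |x k| ^ p := fun k => Real.rpow_nonneg (abs_nonneg (x k)) p
  calc (∑' k, |x k| ^ p) ^ (1 / p)
      ≤ (dStarNorm w x ^ p * ∑' j, weightAvg w j ^ p) ^ (1 / p) := by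
        gcongr
        exact Real.tsum_le_of_sum_range_le hxp
          (sum_range_rpow_abs_le_of_mem_dStarSet hw hx hp.le hs)
    _ = (∑' j, weightAvg w j ^ p) ^ (1 / p) * dStarNorm w x := by
        rw [Real.mul_rpow (Real.rpow_nonneg hM p) hS, one_div, Real.rpow_rpow_inv hM hp.ne',
          mul_comm]

end DStar

lemma weightAvg_one_div_succ (n : ℕ) :
    weightAvg (fun k => 1 / ((k : ℝ) + 1)) n = harmonic (n + 1) / (n + 1) := by
  simp [weightAvg, harmonic]

lemma summable_harmonic_succ_div_rpow {p : ℝ} (hp : 1 < p) :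
    Summable fun j : ℕ => ((harmonic (j + 1) : ℝ) / (j + 1)) ^ p := by
  obtain ⟨ε, hε0, hq⟩ : ∃ ε : ℝ, 0 < ε ∧ (ε - 1) * p < -1 :=
    ⟨(p - 1) / (2 * p), by bound, by field_simp; linarith⟩
  have hH0 : ∀ j : ℕ, 0 ≤ (harmonic (j + 1) : ℝ) / (j + 1) := fun j =>
    div_nonneg (mod_cast (harmonic_pos j.succ_ne_zero).le) (by positivity)
  have hbound : ∀ j : ℕ, ((harmonic (j + 1) : ℝ) / (j + 1)) ^ p ≤
      (1 + 1 / ε) ^ p * ((j : ℝ) + 1) ^ ((ε - 1) * p) := by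
    intro j
    have hn : (1 : ℝ) ≤ (j : ℝ) + 1 := by simp
    have hnε : 1 ≤ ((j : ℝ) + 1) ^ ε := Real.one_le_rpow hn hε0.le
    have hH : (harmonic (j + 1) : ℝ) ≤ (1 + 1 / ε) * ((j : ℝ) + 1) ^ ε :=
      calc (harmonic (j + 1) : ℝ) ≤ 1 + Real.log ((j : ℝ) + 1) := by
            exact_mod_cast harmonic_le_one_add_log (j + 1)
        _ ≤ 1 + ((j : ℝ) + 1) ^ ε / ε := by
            gcongr; exact Real.log_le_rpow_div (by positivity) hε0
        _ ≤ (1 + 1 / ε) * ((j : ℝ) + 1) ^ ε := by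
            rw [add_mul, one_mul, one_div_mul_eq_div]; gcongr
    calc ((harmonic (j + 1) : ℝ) / (j + 1)) ^ p
        ≤ ((1 + 1 / ε) * ((j : ℝ) + 1) ^ ε / ((j : ℝ) + 1)) ^ p := by
          gcongr
          exact hH0 j
      _ = (1 + 1 / ε) ^ p * ((j : ℝ) + 1) ^ ((ε - 1) * p) := by
          rw [mul_div_assoc, ← Real.rpow_sub_one (by positivity), Real.mul_rpow (by positivity)
            (by positivity), Real.rpow_mul (by positivity)]
  have hsum : Summable fun j : ℕ => ((j : ℝ) + 1) ^ ((ε - 1) * p) := by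
    simpa using (summable_nat_add_iff 1).2 (Real.summable_nat_rpow.2 hq)
  exact Summable.of_nonneg_of_le (fun j => Real.rpow_nonneg (hH0 j) p) hbound (hsum.mul_left _)

/-- for `1 < p < ∞`, every element of `G = d_*((1/n)_n)` is a `p`-summable
sequence, and the formal identity from `G` into `ℓ_p` is a bounded linear operator, i.e.
there is `C > 0` with `‖x‖_{ℓ_p} ≤ C ‖x‖_G` for all `x ∈ G`. -/
theorem G_subset_lp_and_formal_identity_bounded (p : ℝ) (hp : 1 < p) :
    (∀ x ∈ dStarSet (fun n => 1 / (n + 1 : ℝ)), Summable (fun k => |x k| ^ p)) ∧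
    ∃ C : ℝ, 0 < C ∧ ∀ x ∈ dStarSet (fun n => 1 / (n + 1 : ℝ)),
      (∑' k : ℕ, |x k| ^ p) ^ (1 / p) ≤ C * dStarNorm (fun n => 1 / (n + 1 : ℝ)) x := by
  have hw : ∀ n : ℕ, 0 < 1 / ((n : ℝ) + 1) := fun n => by positivity
  have hs : Summable fun j => weightAvg (fun n => 1 / ((n : ℝ) + 1)) j ^ p := by
    simpa only [weightAvg_one_div_succ] using summable_harmonic_succ_div_rpow hp
  have hC : 0 < ∑' j, weightAvg (fun n => 1 / ((n : ℝ) + 1)) j ^ p :=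
    hs.tsum_pos (fun j => Real.rpow_nonneg (weightAvg_pos hw j).le p) 0
      (Real.rpow_pos_of_pos (weightAvg_pos hw 0) p)
  exact ⟨fun x hx => summable_rpow_abs_of_mem_dStarSet hw hx (by positivity) hs,
    _, Real.rpow_pos_of_pos hC _,
    fun x hx => tsum_rpow_abs_rpow_le_of_mem_dStarSet hw hx (by positivity) hs⟩
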